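/- arXiv:0710.1620 — 2 statements merged into one kernel-verified Lean document; each statement's English description precedes it below -/
import Mathlib

section
/- Let V be a finite-dimensional complex inner product space with orthogonal direct sum decomposition V = U₁ ⊕ U₂, and let W be any subspace of V with orthogonal projection P_W : V → W. Then W decomposes as the orthogonal direct sum W = P_W(U₁) ⊕ (W ∩ U₂). -/
/-! Write `P` for the orthogonal projection onto `W`. Since `P` is self-adjoint and fixes `W`,
`⟪P u, w⟫ = ⟪u, w⟫` for `u ∈ U₁` and `w ∈ W`, so inside `W` the orthogonal complement of
`P(U₁)` is exactly `W ∩ U₁ᗮ = W ∩ U₂`. In finite dimension `W` is the orthogonal sum of any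
subspace of it and that subspace's complement in `W`. -/

namespace Submodule

variable {𝕜 E : Type*} [RCLike 𝕜] [NormedAddCommGroup E] [InnerProductSpace 𝕜 E]
  (U W : Submodule 𝕜 E) [W.HasOrthogonalProjection]

theorem map_starProjection_le : U.map (W.starProjection : E →ₗ[𝕜] E) ≤ W := by
  rintro _ ⟨u, -, rfl⟩
  exact W.starProjection_apply_mem u

theorem mem_orthogonal_map_starProjection_iff {w : E} (hw : w ∈ W) :
    w ∈ (U.map (W.starProjection : E →ₗ[𝕜] E))ᗮ ↔ w ∈ Uᗮ := by
  have hP : ∀ u, inner 𝕜 (W.starProjection u) w = inner 𝕜 u w := fun u => by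
    rw [inner_starProjection_left_eq_right, starProjection_eq_self_iff.mpr hw]
  simp only [mem_orthogonal, mem_map, forall_exists_index, and_imp, forall_apply_eq_imp_iff₂,
    ContinuousLinearMap.coe_coe, hP]

theorem inf_orthogonal_map_starProjection :
    W ⊓ (U.map (W.starProjection : E →ₗ[𝕜] E))ᗮ = W ⊓ Uᗮ := by
  ext w
  simp only [mem_inf]
  exact and_congr_right (mem_orthogonal_map_starProjection_iff U W)

theorem isOrtho_map_starProjection_inf_orthogonal :
    U.map (W.starProjection : E →ₗ[𝕜] E) ⟂ W ⊓ Uᗮ := by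
  rw [← inf_orthogonal_map_starProjection, isOrtho_comm]
  exact isOrtho_iff_le.mpr inf_le_right

theorem map_starProjection_sup_inf_orthogonal
    [(U.map (W.starProjection : E →ₗ[𝕜] E)).HasOrthogonalProjection] :
    U.map (W.starProjection : E →ₗ[𝕜] E) ⊔ W ⊓ Uᗮ = W := by
  rw [← inf_orthogonal_map_starProjection, inf_comm]
  exact sup_orthogonal_inf_of_hasOrthogonalProjection (map_starProjection_le U W)

end Submodule

/-- Let `V` be a finite-dimensional complex inner product space with an
orthogonal direct sum decomposition `V = U₁ ⊕ U₂` (i.e. `U₂ = U₁ᗮ`), and let `W` be any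
subspace with orthogonal projection `P_W : V → V`.  Then `W` decomposes as the orthogonal
direct sum `W = P_W(U₁) ⊕ (W ∩ U₂)`. -/
theorem stmt0 (V : Type) [NormedAddCommGroup V] [InnerProductSpace ℂ V]
    [FiniteDimensional ℂ V] (U₁ U₂ W : Submodule ℂ V)
    (horth : U₂ = U₁ᗮ)
    (P : V →ₗ[ℂ] V) (hP : P = W.subtype ∘ₗ (W.orthogonalProjection).toLinearMap) :
    (U₁.map P ⊔ (W ⊓ U₂) = W) ∧
    Disjoint (U₁.map P) (W ⊓ U₂) ∧
    (∀ x ∈ U₁.map P, ∀ y ∈ W ⊓ U₂, @inner ℂ V _ x y = 0) := by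
  obtain rfl : P = (W.starProjection : V →ₗ[ℂ] V) := hP
  subst horth
  have hortho := U₁.isOrtho_map_starProjection_inf_orthogonal W
  exact ⟨U₁.map_starProjection_sup_inf_orthogonal W, hortho.disjoint,
    Submodule.isOrtho_iff_inner_eq.mp hortho⟩
end

section
/- Let g be a complex semisimple Lie algebra, V^λ an irreducible module, α a root, and g_α ≅ sl₂ the corresponding subalgebra with standard basis {e_α, f_α, h_α}. For any weight β of V^λ and any integer p ≥ 0 with p + ⟨β,α⟩ ≥ 0, one has {v ∈ V^λ_β : e_α^p·v = 0} = {v ∈ V^λ_β : f_α^{p+⟨β,α⟩}·v = 0}. -/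
open LieModule

section helpers
variable {g : Type} [LieRing g] [LieAlgebra ℂ g]
  {V : Type} [AddCommGroup V] [Module ℂ V] [LieRingModule g V] [LieModule ℂ g V]

lemma wt_pow_f (h f : g) (h2 : ⁅h, f⁆ = (-2 : ℂ) • f) (x : V) (μ : ℂ)
    (hx : ⁅h, x⁆ = μ • x) : ∀ k : ℕ,
    ⁅h, ((toEnd ℂ g V f) ^ k) x⁆ = (μ - 2 * k) • ((toEnd ℂ g V f) ^ k) x := by
  intro k
  induction k with
  | zero => simpa using hx
  | succ k ih =>
    rw [pow_succ', Module.End.mul_apply, toEnd_apply_apply, leibniz_lie h f, h2, ih,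
      smul_lie, lie_smul, ← add_smul]
    congr 1
    push_cast
    ring

lemma comm_E_pow_f (h e f : g) (h3 : ⁅e, f⁆ = h) (h2 : ⁅h, f⁆ = (-2 : ℂ) • f) :
    ∀ (b : ℕ) (x : V) (μ : ℂ), ⁅h, x⁆ = μ • x →
    (toEnd ℂ g V e) (((toEnd ℂ g V f) ^ (b+1)) x) =
      ((toEnd ℂ g V f) ^ (b+1)) ((toEnd ℂ g V e) x)
        + (((b:ℂ)+1) * (μ - b)) • ((toEnd ℂ g V f) ^ b) x := by
  have hsplit : ∀ (k : ℕ) (y : V), ((toEnd ℂ g V f) ^ (k+1)) y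
      = ((toEnd ℂ g V f) ^ k) (⁅f, y⁆ : V) := by
    intro k y
    rw [pow_succ, Module.End.mul_apply, toEnd_apply_apply]
  have he : ∀ (x : V) (μ : ℂ), ⁅h, x⁆ = μ • x →
      (toEnd ℂ g V e) (⁅f, x⁆ : V) = ⁅f, (toEnd ℂ g V e) x⁆ + μ • x := by
    intro x μ hx
    simp only [toEnd_apply_apply]
    rw [leibniz_lie e f x, h3, hx]
    abel
  intro b
  induction b with
  | zero =>
    intro x μ hx
    simp only [zero_add, pow_one, pow_zero, Module.End.one_apply, toEnd_apply_apply]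
    rw [leibniz_lie e f x, h3, hx]
    push_cast
    module
  | succ b ih =>
    intro x μ hx
    have hfx : ⁅h, (⁅f, x⁆ : V)⁆ = (μ - 2) • ⁅f, x⁆ := by
      rw [leibniz_lie h f, h2, hx, lie_smul, smul_lie, ← add_smul]
      congr 1; ring
    rw [hsplit (b+1) x, ih (⁅f, x⁆) (μ - 2) hfx, he x μ hx, map_add, map_smul,
      ← hsplit (b+1) ((toEnd ℂ g V e) x), ← hsplit b x]
    have h1 : ((b+1:ℕ):ℂ) + 1 = (b:ℂ) + 2 := by push_cast; ring
    have h2' : (μ - ((b+1:ℕ):ℂ)) = μ - (b:ℂ) - 1 := by push_cast; ring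
    rw [show (b+1+1 : ℕ) = b+2 from rfl]
    push_cast
    module

lemma exists_pow_f_zero [FiniteDimensional ℂ V] (h f : g) (h2 : ⁅h, f⁆ = (-2 : ℂ) • f)
    (x : V) (μ : ℂ) (hx : ⁅h, x⁆ = μ • x) :
    ∃ m : ℕ, ((toEnd ℂ g V f) ^ m) x = 0 := by
  by_contra! contra
  have hs : (Set.range <| fun (n : ℕ) ↦ μ - 2 * n).Infinite := by
    rw [Set.infinite_range_iff (fun n m ↦ by simp)]; infer_instance
  exact hs ((toEnd ℂ g V h).eigenvectors_linearIndependent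
    {μ - 2 * n | n : ℕ}
    (fun ⟨s, hs⟩ ↦ ((toEnd ℂ g V f) ^ Classical.choose hs) x)
    (fun ⟨r, hr⟩ ↦ by
      simp only [Module.End.hasEigenvector_iff, Module.End.mem_eigenspace_iff]
      constructor
      · rw [toEnd_apply_apply, wt_pow_f h f h2 x μ hx, Classical.choose_spec hr]
      · exact contra _)).finite
lemma mk_triple (h e f : g) (hne : h ≠ 0) (h1 : ⁅h, e⁆ = (2 : ℂ) • e)
    (h2 : ⁅h, f⁆ = (-2 : ℂ) • f) (h3 : ⁅e, f⁆ = h) : IsSl2Triple h e f where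
  h_ne_zero := hne
  lie_e_f := h3
  lie_h_e_nsmul := by rw [h1, two_smul, two_smul]
  lie_h_f_nsmul := by rw [h2, neg_smul, two_smul, two_smul]

lemma key_line [FiniteDimensional ℂ V] (h e f : g) (hne : h ≠ 0)
    (h1 : ⁅h, e⁆ = (2 : ℂ) • e) (h2 : ⁅h, f⁆ = (-2 : ℂ) • f) (h3 : ⁅e, f⁆ = h) :
    ∀ (P : ℕ) (v : V) (N : ℤ), ⁅h, v⁆ = (N : ℂ) • v →
      ((toEnd ℂ g V e) ^ (P+1)) v = 0 →
      ∀ Q : ℕ, (Q : ℤ) = P + 1 + N →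
      ∀ s : ℕ, ((toEnd ℂ g V e) ^ (P+s)) (((toEnd ℂ g V f) ^ (Q+s)) v) = 0 := by
  have t := mk_triple h e f hne h1 h2 h3
  intro P
  induction P with
  | zero =>
    intro v N hv hE Q hQ s
    rcases eq_or_ne v 0 with rfl | hv0
    · simp
    have he1 : ⁅e, v⁆ = 0 := by
      rw [zero_add, pow_one] at hE
      rw [← toEnd_apply_apply ℂ g V e v]
      exact hE
    have prim : t.HasPrimitiveVectorWith v ((N:ℤ) : ℂ) := ⟨hv0, hv, he1⟩
    obtain ⟨n, hn⟩ := prim.exists_nat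
    have hNn : N = n := by exact_mod_cast hn
    have hf0 : ((toEnd ℂ g V f) ^ (n+1)) v = 0 := prim.pow_toEnd_f_eq_zero_of_eq_nat hn
    have hQn : Q + s = s + (n + 1) := by omega
    have hsplit : ((toEnd ℂ g V f) ^ (s+(n+1))) v
        = ((toEnd ℂ g V f) ^ s) (((toEnd ℂ g V f) ^ (n+1)) v) := by
      rw [pow_add, Module.End.mul_apply]
    rw [hQn, hsplit, hf0, map_zero, map_zero]
  | succ P ihP =>
    intro v N hv hE Q hQ s
    have hNc : (N : ℂ) = (Q : ℂ) - (P : ℂ) - 2 := by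
      have hNZ : N = (Q : ℤ) - P - 2 := by push_cast at hQ; omega
      rw [hNZ]; push_cast; ring
    have hw_wt : ⁅h, ((toEnd ℂ g V e) v : V)⁆ = (((N+2 : ℤ)) : ℂ) • (toEnd ℂ g V e) v := by
      rw [toEnd_apply_apply, leibniz_lie h e v, h1, hv, lie_smul, smul_lie, ← add_smul]
      congr 1; push_cast; ring
    have hw_E : ((toEnd ℂ g V e) ^ (P+1)) ((toEnd ℂ g V e) v) = 0 := by
      rw [← Module.End.mul_apply, ← pow_succ]
      exact hE
    have IH := ihP ((toEnd ℂ g V e) v) (N+2) hw_wt hw_E (Q+1) (by push_cast at hQ ⊢; omega)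
    -- the recursion
    have hrel : ∀ s : ℕ, ((toEnd ℂ g V e) ^ (P+(s+1))) (((toEnd ℂ g V f) ^ (Q+(s+1))) v)
        = -((((Q+s+1)*(P+s+2) : ℕ)) : ℂ) •
          ((toEnd ℂ g V e) ^ (P+s)) (((toEnd ℂ g V f) ^ (Q+s)) v) := by
      intro s
      have comm := comm_E_pow_f h e f h3 h2 (Q+s) v ((N:ℤ) : ℂ) hv
      have hIH := IH s
      rw [show Q+1+s = Q+s+1 by omega] at hIH
      have h4 := congrArg (fun y => ((toEnd ℂ g V e) ^ (P+s)) y) comm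
      simp only [map_add, map_smul] at h4
      rw [hIH] at h4
      have hpow : ∀ y : V, ((toEnd ℂ g V e) ^ (P+s)) ((toEnd ℂ g V e) y)
          = ((toEnd ℂ g V e) ^ (P+s+1)) y := by
        intro y; rw [pow_succ, Module.End.mul_apply]
      rw [hpow] at h4
      have hc : ((((Q+s : ℕ)):ℂ) + 1) * (((N:ℤ):ℂ) - ((Q+s : ℕ):ℂ))
          = -((((Q+s+1)*(P+s+2) : ℕ)) : ℂ) := by
        rw [hNc]; push_cast; ring
      rw [hc] at h4
      rw [show P+(s+1) = P+s+1 from rfl, show Q+(s+1) = Q+s+1 from rfl]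
      rw [h4, zero_add]
    -- eventual vanishing
    obtain ⟨m, hm⟩ := exists_pow_f_zero h f h2 v ((N:ℤ):ℂ) hv
    have htail : ∀ s : ℕ, m ≤ Q + s →
        ((toEnd ℂ g V e) ^ (P+s)) (((toEnd ℂ g V f) ^ (Q+s)) v) = 0 := by
      intro s hs
      have hsplit : ((toEnd ℂ g V f) ^ ((Q + s - m) + m)) v
          = ((toEnd ℂ g V f) ^ (Q + s - m)) (((toEnd ℂ g V f) ^ m) v) := by
        rw [pow_add, Module.End.mul_apply]
      rw [show Q + s = (Q + s - m) + m by omega, hsplit, hm, map_zero, map_zero]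
    have hBall : ∀ s : ℕ, ((toEnd ℂ g V e) ^ (P+s)) (((toEnd ℂ g V f) ^ (Q+s)) v) = 0 := by
      have hdesc : ∀ j : ℕ, ((toEnd ℂ g V e) ^ (P+(m-j))) (((toEnd ℂ g V f) ^ (Q+(m-j))) v) = 0 := by
        intro j
        induction j with
        | zero => exact htail m (by omega)
        | succ j ihj =>
          rcases le_or_gt m j with hmj | hmj
          · rw [show m - (j+1) = m - j by omega]; exact ihj
          · have hidx : (m - (j+1)) + 1 = m - j := by omega
            have hr := hrel (m - (j+1))
            rw [hidx] at hr
            rw [ihj] at hr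
            have hcne : (-((((Q+(m-(j+1))+1)*(P+(m-(j+1))+2) : ℕ)) : ℂ)) ≠ 0 := by
              simp only [neg_ne_zero, Nat.cast_ne_zero]
              positivity
            have := (smul_eq_zero.mp hr.symm).resolve_left hcne
            exact this
      intro s
      rcases le_or_gt s m with hsm | hsm
      · have := hdesc (m - s)
        rwa [show m - (m - s) = s by omega] at this
      · exact htail s (by omega)
    rw [show P+1+s = (P+s)+1 by omega, pow_succ', Module.End.mul_apply, hBall s, map_zero]

lemma dirA [FiniteDimensional ℂ V] (h e f : g) (hne : h ≠ 0)
    (h1 : ⁅h, e⁆ = (2 : ℂ) • e) (h2 : ⁅h, f⁆ = (-2 : ℂ) • f) (h3 : ⁅e, f⁆ = h)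
    (v : V) (N : ℤ) (hv : ⁅h, v⁆ = (N : ℂ) • v) (p q : ℕ) (hq : (q : ℤ) = p + N)
    (hE : ((toEnd ℂ g V e) ^ p) v = 0) : ((toEnd ℂ g V f) ^ q) v = 0 := by
  have t := mk_triple h e f hne h1 h2 h3
  cases p with
  | zero =>
    have hv0 : v = 0 := by simpa using hE
    simp [hv0]
  | succ P =>
    by_contra hu
    have hwq := wt_pow_f h f h2 v ((N:ℤ):ℂ) hv q
    obtain ⟨m0, hm0⟩ := exists_pow_f_zero h f h2 (((toEnd ℂ g V f) ^ q) v)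
      (((N:ℤ):ℂ) - 2*q) hwq
    have hcomp : ∀ k : ℕ, ((toEnd ℂ g V f) ^ k) (((toEnd ℂ g V f) ^ q) v)
        = ((toEnd ℂ g V f) ^ (q+k)) v := by
      intro k; rw [add_comm q k, pow_add, Module.End.mul_apply]
    obtain ⟨tt, ht1, ht2⟩ := Nat.exists_not_and_succ_of_not_zero_of_exists
      (p := fun n => ((toEnd ℂ g V f) ^ n) (((toEnd ℂ g V f) ^ q) v) = 0)
      (by simpa using hu) ⟨m0, hm0⟩
    rw [hcomp] at ht1 ht2
    set z : V := ((toEnd ℂ g V f) ^ (q+tt)) v with hzdef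
    have hzh := wt_pow_f h f h2 v ((N:ℤ):ℂ) hv (q+tt)
    have hzf : ⁅f, z⁆ = 0 := by
      rw [toEnd_apply_apply ℂ g V f z |>.symm, hzdef, ← Module.End.mul_apply, ← pow_succ']
      exact ht2
    have hNc : ((N:ℤ):ℂ) = (q : ℂ) - (P : ℂ) - 1 := by
      have hNZ : N = (q : ℤ) - P - 1 := by push_cast at hq; omega
      rw [hNZ]; push_cast; ring
    have prim : (t.symm).HasPrimitiveVectorWith z (((P + q + 2*tt + 1 : ℕ)) : ℂ) := by
      refine ⟨ht1, ?_, hzf⟩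
      rw [neg_lie, hzh, ← neg_smul]
      congr 1
      rw [hNc]; push_cast; ring
    have hne0 := prim.pow_toEnd_f_ne_zero_of_eq_nat (n := P + q + 2*tt + 1) rfl
      (i := P + tt) (by omega)
    have hzero := key_line h e f hne h1 h2 h3 P v N hv hE q (by push_cast at hq ⊢; omega) tt
    exact hne0 hzero
end helpers

/-- Let `g` be a complex semisimple Lie algebra with Cartan subalgebra
`H`, `V = V^λ` an irreducible (finite-dimensional) `g`-module, `α` a root, and
`g_α ≅ sl₂` the corresponding subalgebra with standard basis `{eα, fα, hα}` (so
`⁅hα,eα⁆ = 2eα`, `⁅hα,fα⁆ = -2fα`, `⁅eα,fα⁆ = hα`, `hα ∈ H`).  For any weight `β` of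
`V^λ` with `⟨β,α⟩ = β(hα) = N ∈ ℤ` and any integer `p ≥ 0` with `p + ⟨β,α⟩ ≥ 0`, one has
`{v ∈ V^λ_β : eα^p·v = 0} = {v ∈ V^λ_β : fα^{p+⟨β,α⟩}·v = 0}`. -/
theorem stmt13 (g : Type) [LieRing g] [LieAlgebra ℂ g] [FiniteDimensional ℂ g]
    [LieAlgebra.IsSemisimple ℂ g]
    (H : LieSubalgebra ℂ g) [H.IsCartanSubalgebra]
    (V : Type) [AddCommGroup V] [Module ℂ V] [LieRingModule g V] [LieModule ℂ g V]
    [FiniteDimensional ℂ V] [LieModule.IsIrreducible ℂ g V]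
    (eα fα hα : g) (hαH : hα ∈ H)
    (h1 : ⁅hα, eα⁆ = (2 : ℂ) • eα) (h2 : ⁅hα, fα⁆ = (-2 : ℂ) • fα)
    (h3 : ⁅eα, fα⁆ = hα)
    (β : g → ℂ) (N : ℤ) (hβα : β hα = (N : ℂ))
    (hβwt : ∃ v : V, v ≠ 0 ∧ ∀ h ∈ H, ⁅h, v⁆ = β h • v)
    (p : ℕ) (hpN : 0 ≤ (p : ℤ) + N) :
    {v : V | (∀ h ∈ H, ⁅h, v⁆ = β h • v) ∧
        ((LieModule.toEnd ℂ g V eα) ^ p) v = 0} =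
    {v : V | (∀ h ∈ H, ⁅h, v⁆ = β h • v) ∧
        ((LieModule.toEnd ℂ g V fα) ^ ((p : ℤ) + N).toNat) v = 0} := by
  obtain ⟨v₀, hv₀ne, hv₀⟩ := hβwt
  rcases eq_or_ne hα 0 with h0 | hne
  · have he0 : eα = 0 := by
      have h' : (2:ℂ) • eα = 0 := by rw [← h1, h0, zero_lie]
      simpa using h'
    have hf0 : fα = 0 := by
      have h' : (-2:ℂ) • fα = 0 := by rw [← h2, h0, zero_lie]
      simpa using h'
    have hN0 : N = 0 := by
      have hz : β hα • v₀ = 0 := by rw [← hv₀ hα hαH, h0, zero_lie]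
      have hb : β hα = 0 := by
        rcases smul_eq_zero.mp hz with hh | hh
        · exact hh
        · exact absurd hh hv₀ne
      rw [hβα] at hb
      exact_mod_cast hb
    subst hN0
    rw [he0, hf0, show ((p:ℤ) + (0:ℤ)).toNat = p by simp]
  · ext v
    simp only [Set.mem_setOf_eq]
    have hflip1 : ⁅-hα, fα⁆ = (2:ℂ) • fα := by
      rw [neg_lie, h2, neg_smul]; norm_num
    have hflip2 : ⁅-hα, eα⁆ = (-2:ℂ) • eα := by
      rw [neg_lie, h1, ← neg_smul]
    have hflip3 : ⁅fα, eα⁆ = -hα := by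
      rw [← neg_neg (⁅fα, eα⁆ : g), lie_skew, h3]
    constructor
    · rintro ⟨hwt, hker⟩
      refine ⟨hwt, ?_⟩
      have hv : ⁅hα, v⁆ = ((N:ℤ):ℂ) • v := by rw [hwt hα hαH, hβα]
      exact dirA hα eα fα hne h1 h2 h3 v N hv p ((p:ℤ)+N).toNat
        (by rw [Int.toNat_of_nonneg hpN]) hker
    · rintro ⟨hwt, hker⟩
      refine ⟨hwt, ?_⟩
      have hv : ⁅-hα, v⁆ = (((-N):ℤ):ℂ) • v := by
        rw [neg_lie, hwt hα hαH, hβα, ← neg_smul]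
        norm_num
      exact dirA (-hα) fα eα (neg_ne_zero.mpr hne) hflip1 hflip2 hflip3 v (-N) hv
        ((p:ℤ)+N).toNat p (by omega) hker
end
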